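/- arXiv:1808.04268 — 5 statements merged into one kernel-verified Lean document; each statement's English description precedes it below -/
import Mathlib

section
/- Let A be a self-adjoint operator on H with domain E and let g be a bounded invertible operator with gE = E and g*Ag = A. If x ∈ ker(g−λ)^m ∩ E and y ∈ ker(g−μ)^n ∩ E with λ·conj(μ) ≠ 1, then (Ax, y) = 0. -/
/-!
Write `g x = u + λ x` and `g y = v + μ y`, where `u = (g - λ) x` and `v = (g - μ) y` are killed by
lower powers of `g - λ` and `g - μ`. Expanding the invariance `(A g x, g y) = (A x, y)` gives
`(A x, y) = conj λ μ (A x, y)` plus three terms that vanish by induction on the exponents.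
-/

open scoped LinearPMap ComplexInnerProductSpace

section

variable {K M : Type*} [Field K] [StarRing K] [AddCommGroup M] [Module K M]

theorem Module.End.sesqForm_eq_zero_of_mem_ker_pow {B : M →ₗ⋆[K] M →ₗ[K] K} {T : Module.End K M}
    (hB : ∀ x y, B (T x) (T y) = B x y) {lam mu : K} (hlm : starRingEnd K lam * mu ≠ 1) :
    ∀ {m n : ℕ} {x y : M}, x ∈ LinearMap.ker ((T - lam • 1) ^ m) →
      y ∈ LinearMap.ker ((T - mu • 1) ^ n) → B x y = 0 := by
  intro m
  induction m with
  | zero => intro n x y hx _; simp_all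
  | succ m ihm =>
    intro n x y hx
    induction n generalizing y with
    | zero => intro hy; simp_all
    | succ n ihn =>
      intro hy
      set u := (T - lam • 1) x
      set v := (T - mu • 1) y
      have hu : u ∈ LinearMap.ker ((T - lam • 1) ^ m) := by
        rwa [LinearMap.mem_ker, pow_succ, Module.End.mul_apply] at hx
      have hv : v ∈ LinearMap.ker ((T - mu • 1) ^ n) := by
        rwa [LinearMap.mem_ker, pow_succ, Module.End.mul_apply] at hy
      have hTx : T x = u + lam • x := by simp [u]
      have hTy : T y = v + mu • y := by simp [v]
      have key := hB x y
      rw [hTx, hTy] at key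
      simp only [map_add, map_smulₛₗ, LinearMap.add_apply, LinearMap.smul_apply, smul_eq_mul,
        ihm hu hv, ihm hu hy, ihn hv] at key
      have : (starRingEnd K lam * mu - 1) * B x y = 0 := by linear_combination key
      exact (mul_eq_zero.mp this).resolve_left (sub_ne_zero.mpr hlm)

end

theorem Module.End.mk_mem_ker_pow_restrict_sub_smul {R M : Type*} [CommRing R] [AddCommGroup M]
    [Module R M] {p : Submodule R M} {f : Module.End R M} (hf : Set.MapsTo f p p) (c : R) (k : ℕ)
    {x : M} (hx : x ∈ p) (hk : x ∈ LinearMap.ker ((f - c • 1) ^ k)) :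
    (⟨x, hx⟩ : p) ∈ LinearMap.ker ((f.restrict hf - c • 1) ^ k) := by
  have : f.restrict hf - c • 1 =
      (f - c • 1).restrict fun y hy ↦ p.sub_mem (hf hy) (p.smul_mem c hy) := rfl
  rw [this, Module.End.pow_restrict, LinearMap.mem_ker, LinearMap.restrict_apply]
  exact Subtype.ext hk

namespace LinearPMap

variable {H : Type*} [NormedAddCommGroup H] [InnerProductSpace ℂ H]

noncomputable def innerForm (A : H →ₗ.[ℂ] H) : A.domain →ₗ⋆[ℂ] A.domain →ₗ[ℂ] ℂ :=
  ((innerₛₗ ℂ).comp A.toFun).compl₂ A.domain.subtype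

@[simp]
theorem innerForm_apply (A : H →ₗ.[ℂ] H) (x y : A.domain) : A.innerForm x y = ⟪A x, (y : H)⟫ :=
  rfl

end LinearPMap

theorem stmt5_general {H : Type*} [NormedAddCommGroup H] [InnerProductSpace ℂ H]
    (A : H →ₗ.[ℂ] H)
    (g : H ≃L[ℂ] H)
    (hgE : Submodule.map (((g : H →L[ℂ] H)) : H →ₗ[ℂ] H) A.domain = A.domain)
    (hinv : ∀ (x y : H) (hx : x ∈ A.domain) (hy : y ∈ A.domain)
      (hgx : g x ∈ A.domain) (hgy : g y ∈ A.domain),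
      ⟪(A ⟨g x, hgx⟩ : H), g y⟫ = ⟪(A ⟨x, hx⟩ : H), y⟫)
    (lam mu : ℂ) (hlm : lam * (starRingEnd ℂ) mu ≠ 1) (m n : ℕ)
    (x y : H)
    (hx : x ∈ LinearMap.ker ((((g : H →L[ℂ] H) - lam • (1 : H →L[ℂ] H)) ^ m : H →L[ℂ] H) : H →ₗ[ℂ] H))
    (hxE : x ∈ A.domain)
    (hy : y ∈ LinearMap.ker ((((g : H →L[ℂ] H) - mu • (1 : H →L[ℂ] H)) ^ n : H →L[ℂ] H) : H →ₗ[ℂ] H))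
    (hyE : y ∈ A.domain) :
    ⟪(A ⟨x, hxE⟩ : H), y⟫ = 0 := by
  have hgE' : Set.MapsTo (g : H →ₗ[ℂ] H) A.domain A.domain := fun z hz ↦ hgE ▸ ⟨z, hz, rfl⟩
  have hlm' : starRingEnd ℂ lam * mu ≠ 1 := fun h ↦ hlm <| by
    simpa [mul_comm] using congrArg (starRingEnd ℂ) h
  have hx' : x ∈ LinearMap.ker (((g : H →ₗ[ℂ] H) - lam • 1) ^ m) := by simpa using hx
  have hy' : y ∈ LinearMap.ker (((g : H →ₗ[ℂ] H) - mu • 1) ^ n) := by simpa using hy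
  exact Module.End.sesqForm_eq_zero_of_mem_ker_pow (B := A.innerForm)
    (T := (g : H →ₗ[ℂ] H).restrict hgE') (fun u v ↦ hinv u v u.2 v.2 (hgE' u.2) (hgE' v.2)) hlm'
    (Module.End.mk_mem_ker_pow_restrict_sub_smul hgE' lam m hxE hx')
    (Module.End.mk_mem_ker_pow_restrict_sub_smul hgE' mu n hyE hy')

/-- Let `A` be a densely defined self-adjoint operator with domain `E`, and
`g` a bounded invertible operator with `gE = E` and `g*Ag = A` (i.e. `(Agx, gy) = (Ax, y)`
on `E`).  If `x ∈ ker (g−λ)^m ∩ E`, `y ∈ ker (g−μ)^n ∩ E` and `λ·conj μ ≠ 1`, then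
`(Ax, y) = 0`. -/
theorem stmt5 {H : Type*} [NormedAddCommGroup H] [InnerProductSpace ℂ H] [CompleteSpace H]
    (A : H →ₗ.[ℂ] H) (hdense : Dense (A.domain : Set H)) (hsa : IsSelfAdjoint A)
    (g : H ≃L[ℂ] H)
    (hgE : Submodule.map (((g : H →L[ℂ] H)) : H →ₗ[ℂ] H) A.domain = A.domain)
    (hinv : ∀ (x y : H) (hx : x ∈ A.domain) (hy : y ∈ A.domain)
      (hgx : g x ∈ A.domain) (hgy : g y ∈ A.domain),
      ⟪(A ⟨g x, hgx⟩ : H), g y⟫ = ⟪(A ⟨x, hx⟩ : H), y⟫)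
    (lam mu : ℂ) (hlm : lam * (starRingEnd ℂ) mu ≠ 1) (m n : ℕ)
    (x y : H)
    (hx : x ∈ LinearMap.ker ((((g : H →L[ℂ] H) - lam • (1 : H →L[ℂ] H)) ^ m : H →L[ℂ] H) : H →ₗ[ℂ] H))
    (hxE : x ∈ A.domain)
    (hy : y ∈ LinearMap.ker ((((g : H →L[ℂ] H) - mu • (1 : H →L[ℂ] H)) ^ n : H →L[ℂ] H) : H →ₗ[ℂ] H))
    (hyE : y ∈ A.domain) :
    ⟪(A ⟨x, hxE⟩ : H), y⟫ = 0 :=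
  stmt5_general A g hgE hinv lam mu hlm m n x y hx hxE hy hyE
end

section
/- Let g be a matrix-like operator on H with σ(g) = {λ1,…,λn} and generalized eigenspaces H_{λi} = ker(g−λi)^m spanning H. If A is self-adjoint with domain E, g is invertible, gE = E and g*Ag = A, then E = Σ_i (E ∩ H_{λi}) and ker A = Σ_i (ker A ∩ H_{λi}). -/
/-!
Since the generalized eigenspaces span `H`, the polynomial `P = ∏ (X - λᵢ)^m` annihilates `g`;
the Bézout identities between the pairwise coprime factors of `P` then split every
`g`-invariant subspace into its intersections with the generalized eigenspaces. Both `E` and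
`ker A` are `g`-invariant: for `x ∈ ker A`, `g*Ag = A` makes `A(gx)` orthogonal to `gE = E`,
which is dense.
-/

open scoped LinearPMap ComplexInnerProductSpace

open Polynomial LinearMap Function

section CommRing

variable {R M : Type*} [CommRing R] [AddCommGroup M] [Module R M]
  {f : Module.End R M} {q : Submodule R M}

theorem Submodule.inf_ker_aeval_mul_of_isCoprime (hq : q ≤ q.comap f) {a b : R[X]}
    (hab : IsCoprime a b) :
    q ⊓ ker (aeval f (a * b)) = q ⊓ ker (aeval f a) ⊔ q ⊓ ker (aeval f b) := by
  refine le_antisymm ?_ <| sup_le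
    (inf_le_inf_left q (le_sup_left.trans sup_ker_aeval_le_ker_aeval_mul))
    (inf_le_inf_left q (le_sup_right.trans sup_ker_aeval_le_ker_aeval_mul))
  rintro v ⟨hvq, hv⟩
  obtain ⟨a', b', hab'⟩ := hab
  have hsplit : aeval f (b' * b) v + aeval f (a' * a) v = v := by
    simpa [add_comm] using congr(aeval f $hab' v)
  rw [← hsplit]
  refine Submodule.add_mem_sup ⟨aeval_apply_smul_mem_of_le_comap hvq _ f hq, ?_⟩
    ⟨aeval_apply_smul_mem_of_le_comap hvq _ f hq, ?_⟩
  · rw [SetLike.mem_coe, mem_ker, ← Module.End.mul_apply, ← map_mul, mul_left_comm, map_mul,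
      Module.End.mul_apply, mem_ker.mp hv, map_zero]
  · rw [SetLike.mem_coe, mem_ker, ← Module.End.mul_apply, ← map_mul, mul_left_comm, mul_comm b,
      map_mul, Module.End.mul_apply, mem_ker.mp hv, map_zero]

theorem Submodule.inf_ker_aeval_prod_of_pairwise_isCoprime (hq : q ≤ q.comap f) {ι : Type*}
    (s : Finset ι) (p : ι → R[X]) (hp : (s : Set ι).Pairwise (IsCoprime on p)) :
    q ⊓ ker (aeval f (∏ i ∈ s, p i)) = ⨆ i ∈ s, q ⊓ ker (aeval f (p i)) := by
  classical
  induction s using Finset.induction_on with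
  | empty => simp [Module.End.one_eq_id]
  | insert a s ha ih =>
    rw [Finset.coe_insert] at hp
    have hcop : IsCoprime (p a) (∏ i ∈ s, p i) := IsCoprime.prod_right fun i hi ↦
      hp (Set.mem_insert a _) (Set.mem_insert_of_mem a hi) (by rintro rfl; exact ha hi)
    rw [Finset.prod_insert ha, inf_ker_aeval_mul_of_isCoprime hq hcop,
      ih (hp.mono (Set.subset_insert a _)), Finset.iSup_insert]

theorem Module.End.genEigenspace_eq_ker_aeval (f : Module.End R M) (μ : R) (k : ℕ) :
    f.genEigenspace μ k = ker (aeval f ((X - C μ) ^ k)) := by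
  rw [genEigenspace_nat, map_pow, map_sub, aeval_X, aeval_C, Algebra.algebraMap_eq_smul_one]

end CommRing

section Field

variable {K M : Type*} [Field K] [AddCommGroup M] [Module K M]

theorem Submodule.eq_iSup_inf_genEigenspace_of_finite {f : Module.End K M} {q : Submodule K M}
    {ι : Type*} [Finite ι] (μ : ι → K) (k : ℕ) (hq : q ≤ q.comap f)
    (htop : ⨆ i, f.genEigenspace (μ i) k = ⊤) :
    q = ⨆ i, q ⊓ f.genEigenspace (μ i) k := by
  classical
  have := Fintype.ofFinite ι
  set s := Finset.univ.image μ
  have hcop : (s : Set K).Pairwise (IsCoprime on fun c ↦ (X - C c) ^ k) :=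
    fun c _ d _ hcd ↦ (pairwise_coprime_X_sub_C injective_id hcd).pow
  have hann : ker (aeval f (∏ c ∈ s, (X - C c) ^ k)) = ⊤ := by
    refine top_le_iff.mp (htop ▸ iSup_le fun i ↦ ?_)
    obtain ⟨r, hr⟩ := Finset.dvd_prod_of_mem (fun c ↦ (X - C c) ^ k)
      (Finset.mem_image_of_mem μ (Finset.mem_univ i))
    rw [hr, Module.End.genEigenspace_eq_ker_aeval]
    exact le_sup_left.trans sup_ker_aeval_le_ker_aeval_mul
  calc q = q ⊓ ker (aeval f (∏ c ∈ s, (X - C c) ^ k)) := by rw [hann, inf_top_eq]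
    _ = ⨆ c ∈ s, q ⊓ ker (aeval f ((X - C c) ^ k)) :=
      Submodule.inf_ker_aeval_prod_of_pairwise_isCoprime hq s _ hcop
    _ = ⨆ i, q ⊓ f.genEigenspace (μ i) k := by
      simp only [s, Finset.iSup_finset_image, Finset.mem_univ, iSup_pos,
        Module.End.genEigenspace_eq_ker_aeval]

end Field

section InnerProductSpace

open scoped InnerProductSpace

variable {𝕜 E : Type*} [RCLike 𝕜] [NormedAddCommGroup E] [InnerProductSpace 𝕜 E]

theorem LinearPMap.map_ker_le_comap_of_inner_map_map {A : E →ₗ.[𝕜] E}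
    (hA : Dense (A.domain : Set E)) {g : E →ₗ[𝕜] E} (hgE : A.domain.map g = A.domain)
    (hinv : ∀ (x y : E) (hx : x ∈ A.domain), y ∈ A.domain →
      ∀ (hgx : g x ∈ A.domain), g y ∈ A.domain →
      ⟪(A ⟨g x, hgx⟩ : E), g y⟫_𝕜 = ⟪(A ⟨x, hx⟩ : E), y⟫_𝕜) :
    (ker A.toFun).map A.domain.subtype ≤ ((ker A.toFun).map A.domain.subtype).comap g := by
  have hmaps : A.domain ≤ A.domain.comap g := Submodule.map_le_iff_le_comap.mp hgE.le
  rintro _ ⟨x, hx, rfl⟩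
  have hgx : g x ∈ A.domain := hmaps x.2
  refine ⟨⟨g x, hgx⟩, hA.eq_zero_of_inner_left 𝕜 fun z hz ↦ ?_, rfl⟩
  obtain ⟨w, hw, rfl⟩ := hgE.ge hz
  change ⟪(A ⟨g x, hgx⟩ : E), g w⟫_𝕜 = 0
  rw [hinv x w x.2 hw hgx (hmaps hw), show A x = 0 from hx, inner_zero_left]

end InnerProductSpace

theorem stmt7_general {H : Type*} [NormedAddCommGroup H] [InnerProductSpace ℂ H]
    (A : H →ₗ.[ℂ] H) (hdense : Dense (A.domain : Set H))
    (g : H ≃L[ℂ] H) (nn m : ℕ) (lam : Fin nn → ℂ)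
    (hspan : (⨆ i : Fin nn,
      LinearMap.ker ((((g : H →L[ℂ] H) - lam i • (1 : H →L[ℂ] H)) ^ m : H →L[ℂ] H) :
        H →ₗ[ℂ] H)) = ⊤)
    (hgE : Submodule.map (((g : H →L[ℂ] H)) : H →ₗ[ℂ] H) A.domain = A.domain)
    (hinv : ∀ (x y : H) (hx : x ∈ A.domain) (hy : y ∈ A.domain)
      (hgx : g x ∈ A.domain) (hgy : g y ∈ A.domain),
      ⟪(A ⟨g x, hgx⟩ : H), g y⟫ = ⟪(A ⟨x, hx⟩ : H), y⟫) :
    A.domain = (⨆ i : Fin nn, A.domain ⊓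
        LinearMap.ker ((((g : H →L[ℂ] H) - lam i • (1 : H →L[ℂ] H)) ^ m : H →L[ℂ] H) :
          H →ₗ[ℂ] H)) ∧
      Submodule.map A.domain.subtype (LinearMap.ker A.toFun) =
        ⨆ i : Fin nn, (Submodule.map A.domain.subtype (LinearMap.ker A.toFun) ⊓
          LinearMap.ker ((((g : H →L[ℂ] H) - lam i • (1 : H →L[ℂ] H)) ^ m : H →L[ℂ] H) :
            H →ₗ[ℂ] H)) := by
  have hgen : ∀ c : ℂ,
      ker (((g - c • (1 : H →L[ℂ] H)) ^ m : H →L[ℂ] H) : H →ₗ[ℂ] H) =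
      Module.End.genEigenspace ((g : H →L[ℂ] H) : H →ₗ[ℂ] H) c m := fun c ↦ by
    simp only [ContinuousLinearMap.toLinearMap_pow, ContinuousLinearMap.toLinearMap_sub,
      ContinuousLinearMap.toLinearMap_smul, ContinuousLinearMap.toLinearMap_one]
    exact Module.End.genEigenspace_nat.symm
  simp only [hgen] at hspan ⊢
  exact ⟨Submodule.eq_iSup_inf_genEigenspace_of_finite lam m
      (Submodule.map_le_iff_le_comap.mp hgE.le) hspan,
    Submodule.eq_iSup_inf_genEigenspace_of_finite lam m
      (LinearPMap.map_ker_le_comap_of_inner_map_map hdense hgE hinv) hspan⟩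

/-- Let `g` be a bounded invertible matrix-like operator with
`σ(g) = {λ₁,…,λₙ}` and generalized eigenspaces `H_{λᵢ} = ker (g−λᵢ)^m` spanning `H`.  If `A`
is densely defined self-adjoint with domain `E`, `gE = E` and `g*Ag = A`, then
`E = Σᵢ (E ∩ H_{λᵢ})` and `ker A = Σᵢ (ker A ∩ H_{λᵢ})`. -/
theorem stmt7 {H : Type*} [NormedAddCommGroup H] [InnerProductSpace ℂ H] [CompleteSpace H]
    (A : H →ₗ.[ℂ] H) (hdense : Dense (A.domain : Set H)) (hsa : IsSelfAdjoint A)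
    (g : H ≃L[ℂ] H) (nn m : ℕ) (hm : 0 < m) (lam : Fin nn → ℂ)
    (hspec : spectrum ℂ ((g : H →L[ℂ] H)) = Set.range lam)
    (hspan : (⨆ i : Fin nn,
      LinearMap.ker ((((g : H →L[ℂ] H) - lam i • (1 : H →L[ℂ] H)) ^ m : H →L[ℂ] H) :
        H →ₗ[ℂ] H)) = ⊤)
    (hgE : Submodule.map (((g : H →L[ℂ] H)) : H →ₗ[ℂ] H) A.domain = A.domain)
    (hinv : ∀ (x y : H) (hx : x ∈ A.domain) (hy : y ∈ A.domain)
      (hgx : g x ∈ A.domain) (hgy : g y ∈ A.domain),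
      ⟪(A ⟨g x, hgx⟩ : H), g y⟫ = ⟪(A ⟨x, hx⟩ : H), y⟫) :
    A.domain = (⨆ i : Fin nn, A.domain ⊓
        LinearMap.ker ((((g : H →L[ℂ] H) - lam i • (1 : H →L[ℂ] H)) ^ m : H →L[ℂ] H) :
          H →ₗ[ℂ] H)) ∧
      Submodule.map A.domain.subtype (LinearMap.ker A.toFun) =
        ⨆ i : Fin nn, (Submodule.map A.domain.subtype (LinearMap.ker A.toFun) ⊓
          LinearMap.ker ((((g : H →L[ℂ] H) - lam i • (1 : H →L[ℂ] H)) ^ m : H →L[ℂ] H) :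
            H →ₗ[ℂ] H)) :=
  stmt7_general A hdense g nn m lam hspan hgE hinv
end

section
/- Let M be a 2n×2n real anti-symplectic matrix, i.e., MᵀJM = −J where J is the standard symplectic matrix. If λ ∈ σ(M), then −λ⁻¹ ∈ σ(M), and the generalized eigenspaces satisfy dim ker(M − λ)^{2n} = dim ker(M + λ⁻¹)^{2n}; in particular λ and −λ⁻¹ have the same algebraic multiplicity. -/
/-!
If `Aᵀ S A = -S` for an invertible `S`, then `-S⁻¹ Aᵀ S` is a left inverse of `A`, so
`Aᵀ = -S A⁻¹ S⁻¹` and, for `μ ≠ 0`,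
`Aᵀ - μ = S ((-μ) A⁻¹ (A + μ⁻¹)) S⁻¹`.
Since `A⁻¹` commutes with `A + μ⁻¹`, the `k`-th power of `Aᵀ - μ` is `(A + μ⁻¹)^k` multiplied on
both sides by invertible matrices. Transposition and such multiplications preserve rank and
invertibility, so `(A - μ)^k` and `(A + μ⁻¹)^k` have the same rank, hence kernels of the same
dimension, and `A - μ` is invertible exactly when `A + μ⁻¹` is.
-/

open Matrix

namespace Matrix

variable {ι K : Type*} [Fintype ι] [DecidableEq ι] [Field K]

section TransposeMulMulEqNeg

variable {A S : Matrix ι ι K}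

theorem neg_conj_transpose_mul_eq_one (hS : IsUnit S.det) (hA : Aᵀ * S * A = -S) :
    -(S⁻¹ * Aᵀ * S) * A = 1 := by
  rw [Matrix.neg_mul, mul_assoc, mul_assoc, ← mul_assoc Aᵀ, hA, Matrix.mul_neg,
    nonsing_inv_mul S hS, neg_neg]

theorem isUnit_det_of_transpose_mul_mul_eq_neg (hS : IsUnit S.det) (hA : Aᵀ * S * A = -S) :
    IsUnit A.det :=
  isUnit_det_of_left_inverse (neg_conj_transpose_mul_eq_one hS hA)

theorem transpose_eq_neg_conj_inv (hS : IsUnit S.det) (hA : Aᵀ * S * A = -S) :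
    Aᵀ = -(S * A⁻¹ * S⁻¹) := by
  rw [inv_eq_left_inv (neg_conj_transpose_mul_eq_one hS hA), Matrix.mul_neg, Matrix.neg_mul,
    neg_neg, ← mul_assoc, ← mul_assoc, mul_nonsing_inv S hS, one_mul]
  exact (mul_nonsing_inv_cancel_right S Aᵀ hS).symm

theorem transpose_sub_smul_one_eq_conj (hS : IsUnit S.det) (hA : Aᵀ * S * A = -S) {μ : K}
    (hμ : μ ≠ 0) : Aᵀ - μ • 1 = S * ((-μ) • (A⁻¹ * (A + μ⁻¹ • 1))) * S⁻¹ := by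
  have hinv : A⁻¹ * (A + μ⁻¹ • 1) = 1 + μ⁻¹ • A⁻¹ := by
    rw [Matrix.mul_add, nonsing_inv_mul A (isUnit_det_of_transpose_mul_mul_eq_neg hS hA),
      Matrix.mul_smul, mul_one]
  rw [hinv, transpose_eq_neg_conj_inv hS hA, smul_add, smul_smul, neg_mul, mul_inv_cancel₀ hμ,
    neg_one_smul, Matrix.mul_add, Matrix.add_mul, Matrix.mul_smul, Matrix.smul_mul, mul_one,
    mul_nonsing_inv S hS, Matrix.mul_neg, Matrix.neg_mul, neg_smul, sub_eq_neg_add]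

theorem transpose_sub_smul_one_pow_eq_conj (hS : IsUnit S.det) (hA : Aᵀ * S * A = -S) {μ : K}
    (hμ : μ ≠ 0) (k : ℕ) :
    (Aᵀ - μ • 1) ^ k = S * ((-μ) ^ k • (A⁻¹ ^ k * (A + μ⁻¹ • 1) ^ k)) * S⁻¹ := by
  have hA' := isUnit_det_of_transpose_mul_mul_eq_neg hS hA
  have hcomm : Commute A⁻¹ (A + μ⁻¹ • 1) :=
    .add_right (by rw [Commute, SemiconjBy, nonsing_inv_mul A hA', mul_nonsing_inv A hA'])
      ((Commute.one_right _).smul_right _)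
  have hconj := Units.conj_pow (nonsingInvUnit S hS) ((-μ) • (A⁻¹ * (A + μ⁻¹ • 1))) k
  rw [coe_units_inv] at hconj
  rw [transpose_sub_smul_one_eq_conj hS hA hμ, ← hcomm.mul_pow, ← smul_pow]
  exact hconj

theorem rank_pow_sub_smul_one_eq_rank_pow_add_inv_smul_one (hS : IsUnit S.det)
    (hA : Aᵀ * S * A = -S) {μ : K} (hμ : μ ≠ 0) (k : ℕ) :
    ((A - μ • 1) ^ k).rank = ((A + μ⁻¹ • 1) ^ k).rank := by
  have hA' := isUnit_det_of_transpose_mul_mul_eq_neg hS hA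
  calc ((A - μ • 1) ^ k).rank = ((Aᵀ - μ • 1) ^ k).rank := by
        rw [← rank_transpose, transpose_pow, transpose_sub, transpose_smul, transpose_one]
    _ = ((-μ) ^ k • (A⁻¹ ^ k * (A + μ⁻¹ • 1) ^ k)).rank := by
        rw [transpose_sub_smul_one_pow_eq_conj hS hA hμ,
          rank_mul_eq_left_of_isUnit_det _ _ (isUnit_nonsing_inv_det S hS),
          rank_mul_eq_right_of_isUnit_det _ _ hS]
    _ = ((A + μ⁻¹ • 1) ^ k).rank := by
        rw [rank_smul_of_mem_nonZeroDivisors _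
            (mem_nonZeroDivisors_of_ne_zero (pow_ne_zero k (neg_ne_zero.2 hμ))),
          rank_mul_eq_right_of_isUnit_det _ _
            (by simpa using (isUnit_nonsing_inv_det A hA').pow k)]

theorem isUnit_sub_smul_one_iff_isUnit_add_inv_smul_one (hS : IsUnit S.det)
    (hA : Aᵀ * S * A = -S) {μ : K} (hμ : μ ≠ 0) :
    IsUnit (A - μ • 1) ↔ IsUnit (A + μ⁻¹ • 1) := by
  have hA' := isUnit_det_of_transpose_mul_mul_eq_neg hS hA
  rw [← isUnit_transpose, transpose_sub, transpose_smul, transpose_one,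
    transpose_sub_smul_one_eq_conj hS hA hμ]
  simp [isUnit_iff_isUnit_det, det_mul, hμ, hS.ne_zero, hA'.ne_zero]

theorem neg_inv_mem_spectrum (hS : IsUnit S.det) (hA : Aᵀ * S * A = -S) {μ : K} (hμ : μ ≠ 0)
    (hμA : μ ∈ spectrum K A) : -μ⁻¹ ∈ spectrum K A := by
  simp only [spectrum.mem_iff, Algebra.algebraMap_eq_smul_one, ← IsUnit.neg_iff (_ - A),
    neg_sub] at hμA ⊢
  rwa [neg_smul, sub_neg_eq_add, ← isUnit_sub_smul_one_iff_isUnit_add_inv_smul_one hS hA hμ]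

end TransposeMulMulEqNeg

theorem finrank_ker_mulVecLin_eq_card_sub_rank {m n : Type*} [Fintype m] [Fintype n]
    (X : Matrix m n K) :
    Module.finrank K (LinearMap.ker X.mulVecLin) = Fintype.card n - X.rank := by
  have h := LinearMap.finrank_range_add_finrank_ker X.mulVecLin
  rw [Module.finrank_fintype_fun_eq_card] at h
  rw [rank]
  omega

end Matrix

/-- Let `M` be a real `2n×2n` anti-symplectic matrix (`MᵀJM = −J`).  If
`λ ∈ σ(M)` (complex spectrum, `λ ≠ 0`), then `−λ⁻¹ ∈ σ(M)`, and
`dim ker (M−λ)^{2n} = dim ker (M+λ⁻¹)^{2n}`; in particular `λ` and `−λ⁻¹` have the same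
algebraic multiplicity. -/
theorem stmt8 {n : ℕ} (M : Matrix (Fin n ⊕ Fin n) (Fin n ⊕ Fin n) ℝ)
    (hM : Mᵀ * Matrix.J (Fin n) ℝ * M = -Matrix.J (Fin n) ℝ)
    (lam : ℂ) (hlam0 : lam ≠ 0)
    (hlam : lam ∈ spectrum ℂ (M.map (algebraMap ℝ ℂ))) :
    (-lam⁻¹) ∈ spectrum ℂ (M.map (algebraMap ℝ ℂ)) ∧
      Module.finrank ℂ (LinearMap.ker
          (((M.map (algebraMap ℝ ℂ) - lam • 1) ^ (2 * n)).mulVecLin)) =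
        Module.finrank ℂ (LinearMap.ker
          (((M.map (algebraMap ℝ ℂ) + lam⁻¹ • 1) ^ (2 * n)).mulVecLin)) := by
  have hJ : IsUnit (J (Fin n) ℂ).det := isUnit_det_J _ _
  have hA : (M.map (algebraMap ℝ ℂ))ᵀ * J (Fin n) ℂ * M.map (algebraMap ℝ ℂ) = -J (Fin n) ℂ := by
    simpa only [_root_.map_mul, _root_.map_neg, RingHom.mapMatrix_apply, transpose_map, map_J]
      using congrArg (algebraMap ℝ ℂ).mapMatrix hM
  refine ⟨neg_inv_mem_spectrum hJ hA hlam0 hlam, ?_⟩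
  rw [finrank_ker_mulVecLin_eq_card_sub_rank, finrank_ker_mulVecLin_eq_card_sub_rank,
    rank_pow_sub_smul_one_eq_rank_pow_add_inv_smul_one hJ hA hlam0]
end

section
/- Let M be a 2n×2n anti-symplectic matrix and λ, μ ∈ σ(M) with λ·conj(μ) ≠ −1. Then the generalized eigenspaces V_λ = ker(M−λ)^{2n} and V_μ = ker(M−μ)^{2n} (in ℂ^{2n}) are J-orthogonal: (Jx, y) = 0 for all x ∈ V_λ, y ∈ V_μ. -/
open Matrix

/-- Let `M` be a `2n×2n` anti-symplectic matrix (`M*JM = −J`) and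
`λ, μ ∈ σ(M)` with `λ·conj μ ≠ −1`.  Then the generalized eigenspaces
`V_λ = ker (M−λ)^{2n}` and `V_μ = ker (M−μ)^{2n}` in `ℂ^{2n}` are `J`-orthogonal:
`(Jx, y) = 0` for all `x ∈ V_λ`, `y ∈ V_μ`. -/
theorem stmt9 {n : ℕ} (M : Matrix (Fin n ⊕ Fin n) (Fin n ⊕ Fin n) ℂ)
    (hM : Mᴴ * Matrix.J (Fin n) ℂ * M = -Matrix.J (Fin n) ℂ)
    (lam mu : ℂ) (hlam : lam ∈ spectrum ℂ M) (hmu : mu ∈ spectrum ℂ M)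
    (hlm : lam * (starRingEnd ℂ) mu ≠ -1)
    (x y : Fin n ⊕ Fin n → ℂ)
    (hx : ((M - lam • 1) ^ (2 * n)).mulVec x = 0)
    (hy : ((M - mu • 1) ^ (2 * n)).mulVec y = 0) :
    (Matrix.J (Fin n) ℂ).mulVec x ⬝ᵥ star y = 0 := by
  set Jn := Matrix.J (Fin n) ℂ with hJn
  -- the sesquilinear form
  set B : (Fin n ⊕ Fin n → ℂ) → (Fin n ⊕ Fin n → ℂ) → ℂ :=
    fun u v => Jn.mulVec u ⬝ᵥ star v with hB
  -- key relation B (Mx) (My) = -B x y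
  have hrel : ∀ u v, B (M.mulVec u) (M.mulVec v) = - B u v := by
    intro u v
    have adj : ∀ w, w ⬝ᵥ star (M.mulVec v) = Mᴴ.mulVec w ⬝ᵥ star v := by
      intro w
      rw [star_mulVec, dotProduct_comm (Mᴴ.mulVec w), dotProduct_mulVec,
        dotProduct_comm]
    calc Jn.mulVec (M.mulVec u) ⬝ᵥ star (M.mulVec v)
        = (Jn * M).mulVec u ⬝ᵥ star (M.mulVec v) := by rw [mulVec_mulVec]
      _ = Mᴴ.mulVec ((Jn * M).mulVec u) ⬝ᵥ star v := adj _
      _ = ((Mᴴ * Jn * M)).mulVec u ⬝ᵥ star v := by rw [mulVec_mulVec, mul_assoc]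
      _ = ((-Jn)).mulVec u ⬝ᵥ star v := by rw [hM]
      _ = - (Jn.mulVec u ⬝ᵥ star v) := by rw [neg_mulVec, neg_dotProduct]
  -- main induction
  have key : ∀ N k l (u v : Fin n ⊕ Fin n → ℂ), k + l ≤ N →
      ((M - lam • 1) ^ k).mulVec u = 0 → ((M - mu • 1) ^ l).mulVec v = 0 →
      B u v = 0 := by
    intro N
    induction N with
    | zero =>
      intro k l u v hkl hu hv
      have hk : k = 0 := by omega
      subst hk
      simp only [pow_zero, one_mulVec] at hu
      simp [hB, hu]
    | succ N ih =>
      intro k l u v hkl hu hv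
      match k, l with
      | 0, _ =>
        simp only [pow_zero, one_mulVec] at hu
        simp [hB, hu]
      | _, 0 =>
        simp only [pow_zero, one_mulVec] at hv
        simp [hB, hv]
      | k + 1, l + 1 =>
        set u' := (M - lam • 1).mulVec u with hu'
        set v' := (M - mu • 1).mulVec v with hv'
        have hu'0 : ((M - lam • 1) ^ k).mulVec u' = 0 := by
          rw [hu', mulVec_mulVec, ← pow_succ]; exact hu
        have hv'0 : ((M - mu • 1) ^ l).mulVec v' = 0 := by
          rw [hv', mulVec_mulVec, ← pow_succ]; exact hv
        have h1 : B u' v = 0 := ih k (l + 1) u' v (by omega) hu'0 hv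
        have h2 : B u v' = 0 := ih (k + 1) l u v' (by omega) hu hv'0
        have h3 : B u' v' = 0 := ih k l u' v' (by omega) hu'0 hv'0
        have hMu : M.mulVec u = lam • u + u' := by
          rw [hu', sub_mulVec, smul_mulVec, one_mulVec]; abel
        have hMv : M.mulVec v = mu • v + v' := by
          rw [hv', sub_mulVec, smul_mulVec, one_mulVec]; abel
        have hexp : B (M.mulVec u) (M.mulVec v)
            = lam * (starRingEnd ℂ) mu * B u v := by
          rw [hMu, hMv]
          simp only [hB]
          rw [mulVec_add, mulVec_smul]
          simp only [star_add, star_smul, dotProduct_add, add_dotProduct,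
            smul_dotProduct, dotProduct_smul]
          have e1 : Jn.mulVec u' ⬝ᵥ star v = 0 := h1
          have e2 : Jn.mulVec u ⬝ᵥ star v' = 0 := h2
          have e3 : Jn.mulVec u' ⬝ᵥ star v' = 0 := h3
          rw [e1, e2, e3]
          simp [smul_eq_mul, RCLike.star_def]
          ring
        rw [hrel] at hexp
        have : (lam * (starRingEnd ℂ) mu + 1) * B u v = 0 := by
          linear_combination -hexp
        rcases mul_eq_zero.mp this with h | h
        · exact (hlm (by linear_combination h)).elim
        · exact h
  exact key (2 * n + 2 * n) (2 * n) (2 * n) x y le_rfl hx hy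
end

section
/- Let A be self-adjoint with domain E on H, let g be an invertible matrix-like operator with gE = E and g*Ag = A, and suppose λ ∉ 𝕌 (the unit circle) with λ, conj(λ)⁻¹ ∈ σ(g). Set F_λ = H_λ + H_{conj(λ)⁻¹} (sum of generalized eigenspaces). Then there is a bounded self-adjoint involution Q on the external direct sum H_λ ⊕ H_{conj(λ)⁻¹} such that Q*(A|_{F_λ})Q = −A|_{F_λ}; consequently the quadratic form of A restricted to F_λ is anti-conjugate to its negative. -/
/-!
Write `B u v = ⟪A u, v⟫` on the domain of `A`. As `g` preserves `B`, expanding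
`B (g u) (g v) = B u v` with `g u = α u + (g - α) u` and `g v = β v + (g - β) v` gives
`(conj α β - 1) B u v = 0` modulo terms that vanish by induction on the nilpotency orders of `g - α`
at `u` and of `g - β` at `v`. So generalized eigenvectors for `α`, `β` with `conj α β ≠ 1` are
`B`-orthogonal; for `α = β` off the unit circle this makes `H_λ` and `H_{conj(λ)⁻¹}` `B`-isotropic,
and on the sum of two isotropic subspaces `x + y ↦ -x + y` only flips the sign of the cross terms.
-/

open scoped LinearPMap ComplexInnerProductSpace ComplexConjugate

namespace LinearPMap

variable {𝕜 H : Type*} [RCLike 𝕜] [NormedAddCommGroup H] [InnerProductSpace 𝕜 H]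
  (A : H →ₗ.[𝕜] H) {g : H →L[𝕜] H}

lemma sub_smul_one_apply_mem_domain (hg : Set.MapsTo g A.domain A.domain) (α : 𝕜) {u : H}
    (hu : u ∈ A.domain) : (g - α • 1) u ∈ A.domain :=
  A.domain.sub_mem (hg hu) (A.domain.smul_mem α hu)

lemma inner_apply_neg_add_eq_neg_of_isotropic {x x' y y' : H} (hx : x ∈ A.domain)
    (hy : y ∈ A.domain) (hxx' : inner 𝕜 (A ⟨x, hx⟩ : H) x' = 0)
    (hyy' : inner 𝕜 (A ⟨y, hy⟩ : H) y' = 0) :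
    inner 𝕜 (A ⟨-x + y, A.domain.add_mem (A.domain.neg_mem hx) hy⟩ : H) (-x' + y') =
      -inner 𝕜 (A ⟨x + y, A.domain.add_mem hx hy⟩ : H) (x' + y') := by
  have hneg : (⟨-x + y, A.domain.add_mem (A.domain.neg_mem hx) hy⟩ : A.domain) =
      -⟨x, hx⟩ + ⟨y, hy⟩ := rfl
  have hadd : (⟨x + y, A.domain.add_mem hx hy⟩ : A.domain) = ⟨x, hx⟩ + ⟨y, hy⟩ := rfl
  rw [hneg, hadd, A.map_add, A.map_add, A.map_neg]
  simp only [inner_add_left, inner_add_right, inner_neg_left, inner_neg_right, hxx', hyy']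
  ring

variable (hg : Set.MapsTo g A.domain A.domain)
  (hinv : ∀ (x y : H) (hx : x ∈ A.domain) (_ : y ∈ A.domain)
    (hgx : g x ∈ A.domain) (_ : g y ∈ A.domain),
    inner 𝕜 (A ⟨g x, hgx⟩ : H) (g y) = inner 𝕜 (A ⟨x, hx⟩ : H) y)
include hg hinv

lemma inner_apply_eq_zero_of_inner_sub_smul_one {α β : 𝕜} (hαβ : conj α * β ≠ 1) {u v : H}
    (hu : u ∈ A.domain) (hv : v ∈ A.domain)
    (hu_v' : inner 𝕜 (A ⟨u, hu⟩ : H) ((g - β • 1) v) = 0)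
    (hu'_v : inner 𝕜 (A ⟨(g - α • 1) u, A.sub_smul_one_apply_mem_domain hg α hu⟩ : H) v = 0)
    (hu'_v' : inner 𝕜 (A ⟨(g - α • 1) u, A.sub_smul_one_apply_mem_domain hg α hu⟩ : H)
      ((g - β • 1) v) = 0) :
    inner 𝕜 (A ⟨u, hu⟩ : H) v = 0 := by
  have hgu : (⟨g u, hg hu⟩ : A.domain) =
      α • ⟨u, hu⟩ + ⟨(g - α • 1) u, A.sub_smul_one_apply_mem_domain hg α hu⟩ := by
    ext; simp
  have hgv : g v = β • v + (g - β • 1) v := by simp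
  have key := hinv u v hu hv (hg hu) (hg hv)
  rw [hgu, hgv, A.map_add, A.map_smul] at key
  simp only [inner_add_left, inner_add_right, inner_smul_left, inner_smul_right, hu_v', hu'_v,
    hu'_v'] at key
  have h : (conj α * β - 1) * inner 𝕜 (A ⟨u, hu⟩ : H) v = 0 := by linear_combination key
  exact (mul_eq_zero.mp h).resolve_left (sub_ne_zero.mpr hαβ)

lemma inner_apply_eq_zero_of_pow_sub_smul_one {α β : 𝕜} (hαβ : conj α * β ≠ 1) (k l : ℕ)
    {u v : H} (hku : ((g - α • 1) ^ k) u = 0) (hlv : ((g - β • 1) ^ l) v = 0)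
    (hu : u ∈ A.domain) (hv : v ∈ A.domain) :
    inner 𝕜 (A ⟨u, hu⟩ : H) v = 0 := by
  induction k generalizing l u v with
  | zero =>
    obtain rfl : u = 0 := by simpa using hku
    simp [show (⟨0, hu⟩ : A.domain) = 0 from rfl]
  | succ k ihk =>
    induction l generalizing v with
    | zero =>
      obtain rfl : v = 0 := by simpa using hlv
      simp
    | succ l ihl =>
      rw [pow_succ, mul_apply_eq_comp] at hku hlv
      have hv' := A.sub_smul_one_apply_mem_domain hg β hv
      exact A.inner_apply_eq_zero_of_inner_sub_smul_one hg hinv hαβ hu hv (ihl hlv hv')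
        (ihk (l + 1) hku (by rwa [pow_succ, mul_apply_eq_comp]) _ hv) (ihk l hku hlv _ hv')

lemma inner_apply_eq_zero_of_mem_ker_pow {α : 𝕜} (hα : ‖α‖ ≠ 1) {m : ℕ} {u v : H}
    (hu' : u ∈ LinearMap.ker (((g - α • 1) ^ m : H →L[𝕜] H) : H →ₗ[𝕜] H))
    (hv' : v ∈ LinearMap.ker (((g - α • 1) ^ m : H →L[𝕜] H) : H →ₗ[𝕜] H))
    (hu : u ∈ A.domain) (hv : v ∈ A.domain) :
    inner 𝕜 (A ⟨u, hu⟩ : H) v = 0 := by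
  refine A.inner_apply_eq_zero_of_pow_sub_smul_one hg hinv ?_ m m hu' hv' hu hv
  rw [RCLike.conj_mul]
  exact_mod_cast (pow_eq_one_iff_of_nonneg (norm_nonneg α) two_ne_zero).not.mpr hα

end LinearPMap

theorem stmt17_general {H : Type*} [NormedAddCommGroup H] [InnerProductSpace ℂ H]
    (A : H →ₗ.[ℂ] H)
    (g : H ≃L[ℂ] H) (m : ℕ)
    (hgE : Submodule.map (((g : H →L[ℂ] H)) : H →ₗ[ℂ] H) A.domain = A.domain)
    (hinv : ∀ (x y : H) (hx : x ∈ A.domain) (hy : y ∈ A.domain)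
      (hgx : g x ∈ A.domain) (hgy : g y ∈ A.domain),
      ⟪(A ⟨g x, hgx⟩ : H), g y⟫ = ⟪(A ⟨x, hx⟩ : H), y⟫)
    (lam₀ : ℂ) (hU : ‖lam₀‖ ≠ 1)
    (x x' y y' : H)
    (hx : x ∈ LinearMap.ker ((((g : H →L[ℂ] H) - lam₀ • (1 : H →L[ℂ] H)) ^ m : H →L[ℂ] H) : H →ₗ[ℂ] H))
    (hx' : x' ∈ LinearMap.ker ((((g : H →L[ℂ] H) - lam₀ • (1 : H →L[ℂ] H)) ^ m : H →L[ℂ] H) : H →ₗ[ℂ] H))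
    (hy : y ∈ LinearMap.ker
      ((((g : H →L[ℂ] H) - ((starRingEnd ℂ) lam₀)⁻¹ • (1 : H →L[ℂ] H)) ^ m : H →L[ℂ] H) : H →ₗ[ℂ] H))
    (hy' : y' ∈ LinearMap.ker
      ((((g : H →L[ℂ] H) - ((starRingEnd ℂ) lam₀)⁻¹ • (1 : H →L[ℂ] H)) ^ m : H →L[ℂ] H) : H →ₗ[ℂ] H))
    (hxE : x ∈ A.domain) (hx'E : x' ∈ A.domain)
    (hyE : y ∈ A.domain) (hy'E : y' ∈ A.domain) :
    ⟪(A ⟨-x + y, A.domain.add_mem (A.domain.neg_mem hxE) hyE⟩ : H), -x' + y'⟫ =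
      -⟪(A ⟨x + y, A.domain.add_mem hxE hyE⟩ : H), x' + y'⟫ := by
  have hg : Set.MapsTo (g : H →L[ℂ] H) A.domain A.domain := fun u hu => hgE ▸ ⟨u, hu, rfl⟩
  have hU' : ‖(starRingEnd ℂ lam₀)⁻¹‖ ≠ 1 := by
    rwa [norm_inv, RCLike.norm_conj, inv_ne_one]
  exact A.inner_apply_neg_add_eq_neg_of_isotropic hxE hyE
    (A.inner_apply_eq_zero_of_mem_ker_pow hg hinv hU hx hx' hxE hx'E)
    (A.inner_apply_eq_zero_of_mem_ker_pow hg hinv hU' hy hy' hyE hy'E)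

/-- Let `A` be densely defined self-adjoint with domain `E`, `g` an
invertible matrix-like operator with `gE = E` and `g*Ag = A`, and `λ` off the unit circle
with `λ, conj(λ)⁻¹ ∈ σ(g)`.  On `F_λ = H_λ + H_{conj(λ)⁻¹}` the involution
`Q(x+y) = −x+y` (for `x ∈ H_λ`, `y ∈ H_{conj(λ)⁻¹}`) anti-conjugates the quadratic form of
`A` to its negative: `(A Q(x+y), Q(x'+y')) = −(A(x+y), x'+y')`. -/
theorem stmt17 {H : Type*} [NormedAddCommGroup H] [InnerProductSpace ℂ H] [CompleteSpace H]
    (A : H →ₗ.[ℂ] H) (hdense : Dense (A.domain : Set H)) (hsa : IsSelfAdjoint A)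
    (g : H ≃L[ℂ] H) (nn m : ℕ) (hm : 0 < m) (lam : Fin nn → ℂ)
    (hspec : spectrum ℂ ((g : H →L[ℂ] H)) = Set.range lam)
    (hprod : (List.ofFn fun i : Fin nn =>
      ((g : H →L[ℂ] H) - lam i • (1 : H →L[ℂ] H)) ^ m).prod = 0)
    (hgE : Submodule.map (((g : H →L[ℂ] H)) : H →ₗ[ℂ] H) A.domain = A.domain)
    (hinv : ∀ (x y : H) (hx : x ∈ A.domain) (hy : y ∈ A.domain)
      (hgx : g x ∈ A.domain) (hgy : g y ∈ A.domain),
      ⟪(A ⟨g x, hgx⟩ : H), g y⟫ = ⟪(A ⟨x, hx⟩ : H), y⟫)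
    (lam₀ : ℂ) (hU : ‖lam₀‖ ≠ 1)
    (hσ : lam₀ ∈ spectrum ℂ ((g : H →L[ℂ] H)))
    (hσ' : ((starRingEnd ℂ) lam₀)⁻¹ ∈ spectrum ℂ ((g : H →L[ℂ] H)))
    (x x' y y' : H)
    (hx : x ∈ LinearMap.ker ((((g : H →L[ℂ] H) - lam₀ • (1 : H →L[ℂ] H)) ^ m : H →L[ℂ] H) : H →ₗ[ℂ] H))
    (hx' : x' ∈ LinearMap.ker ((((g : H →L[ℂ] H) - lam₀ • (1 : H →L[ℂ] H)) ^ m : H →L[ℂ] H) : H →ₗ[ℂ] H))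
    (hy : y ∈ LinearMap.ker
      ((((g : H →L[ℂ] H) - ((starRingEnd ℂ) lam₀)⁻¹ • (1 : H →L[ℂ] H)) ^ m : H →L[ℂ] H) : H →ₗ[ℂ] H))
    (hy' : y' ∈ LinearMap.ker
      ((((g : H →L[ℂ] H) - ((starRingEnd ℂ) lam₀)⁻¹ • (1 : H →L[ℂ] H)) ^ m : H →L[ℂ] H) : H →ₗ[ℂ] H))
    (hxE : x ∈ A.domain) (hx'E : x' ∈ A.domain)
    (hyE : y ∈ A.domain) (hy'E : y' ∈ A.domain) :
    ⟪(A ⟨-x + y, A.domain.add_mem (A.domain.neg_mem hxE) hyE⟩ : H), -x' + y'⟫ =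
      -⟪(A ⟨x + y, A.domain.add_mem hxE hyE⟩ : H), x' + y'⟫ :=
  stmt17_general A g m hgE hinv lam₀ hU x x' y y' hx hx' hy hy' hxE hx'E hyE hy'E
end
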